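/- There exists a constant c > 0 such that for every integer n ≥ 2 the following holds. Let (X,d) be the comb metric on 2n points with parameter M = n. If Σ is a (τ,1)-left-sided LSO for (X,d), then τ ≥ c·log₂ n. -/

import Mathlib

/-- The comb metric on `2n` points with parameter `M = n`: path points `inl i`
at mutual distances `|i−j|`, each with a pendant leaf `inr i` attached by an
edge of weight `n`. -/
def combD (n : ℕ) : (Fin n ⊕ Fin n) → (Fin n ⊕ Fin n) → ℝ
  | Sum.inl i, Sum.inl j => |(i.val : ℝ) - (j.val : ℝ)|
  | Sum.inl i, Sum.inr j => n + |(i.val : ℝ) - (j.val : ℝ)|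
  | Sum.inr i, Sum.inl j => n + |(i.val : ℝ) - (j.val : ℝ)|
  | Sum.inr i, Sum.inr j => if i = j then 0 else 2 * n + |(i.val : ℝ) - (j.val : ℝ)|

/-- A `(τ,ρ)`-left-sided LSO for `(X,d)`: a finite family of duplicate-free
lists of points of `X` such that every point occurs in at most `τ` lists, and
for every pair `x,y` some list contains both so that all points at positions at
most those of `x` resp. `y` are within distance `ρ·d(x,y)` of each other. -/
def IsLeftSidedLSO {X : Type*} [DecidableEq X] (d : X → X → ℝ) (τ : ℕ) (ρ : ℝ)
    (F : Finset (List X)) : Prop :=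
  (∀ σ ∈ F, σ.Nodup) ∧
  (∀ x : X, (F.filter (fun σ => x ∈ σ)).card ≤ τ) ∧
  (∀ x y : X, ∃ σ ∈ F, x ∈ σ ∧ y ∈ σ ∧
    ∀ x' ∈ σ, ∀ y' ∈ σ, σ.idxOf x' ≤ σ.idxOf x → σ.idxOf y' ≤ σ.idxOf y →
      d x' y' ≤ ρ * d x y)

lemma harmonic_lower' (m : ℕ) : Real.log ((m:ℝ)+1) ≤ ∑ k ∈ Finset.range m, (1:ℝ)/((k:ℝ)+1) := by
  induction m with
  | zero => simp
  | succ m ih =>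
    rw [Finset.sum_range_succ]
    have hlog : Real.log (((m:ℝ)+2)/((m:ℝ)+1)) ≤ ((m:ℝ)+2)/((m:ℝ)+1) - 1 :=
      Real.log_le_sub_one_of_pos (by positivity)
    have hdiv : Real.log (((m:ℝ)+2)/((m:ℝ)+1)) = Real.log ((m:ℝ)+2) - Real.log ((m:ℝ)+1) :=
      Real.log_div (by positivity) (by positivity)
    have harith : ((m:ℝ)+2)/((m:ℝ)+1) - 1 = 1/((m:ℝ)+1) := by
      field_simp
      norm_num
    rw [hdiv, harith] at hlog
    have hcast : ((m+1 : ℕ) : ℝ) + 1 = (m:ℝ) + 2 := by push_cast; ring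
    rw [hcast]
    push_cast
    linarith

lemma prod_sum_le' (U V : Finset ℕ) :
    ∑ q ∈ U ×ˢ V, (1:ℝ)/((q.1:ℝ)+(q.2:ℝ)+1) ≤ (U.card : ℝ) + V.card := by
  rw [Finset.sum_product]
  have key : ∀ u ∈ U, ∀ v ∈ V, (1:ℝ)/((u:ℝ)+(v:ℝ)+1) ≤
      (if v ≤ u then (1:ℝ)/((u:ℝ)+1) else 0) + (if u ≤ v then (1:ℝ)/((v:ℝ)+1) else 0) := by
    intro u _ v _
    rcases le_or_gt v u with hvu | huv
    · have h1 : (1:ℝ)/((u:ℝ)+(v:ℝ)+1) ≤ 1/((u:ℝ)+1) := by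
        apply one_div_le_one_div_of_le (by positivity)
        have : (0:ℝ) ≤ (v:ℝ) := by positivity
        linarith
      have h2 : (0:ℝ) ≤ (if u ≤ v then (1:ℝ)/((v:ℝ)+1) else 0) := by
        split <;> positivity
      rw [if_pos hvu]; linarith
    · have h1 : (1:ℝ)/((u:ℝ)+(v:ℝ)+1) ≤ 1/((v:ℝ)+1) := by
        apply one_div_le_one_div_of_le (by positivity)
        have : (0:ℝ) ≤ (u:ℝ) := by positivity
        linarith
      have h2 : (0:ℝ) ≤ (if v ≤ u then (1:ℝ)/((u:ℝ)+1) else 0) := by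
        split <;> positivity
      rw [if_pos (le_of_lt huv)]; linarith
  have hbound : ∀ (W : Finset ℕ) (u : ℕ), ∑ v ∈ W, (if v ≤ u then (1:ℝ)/((u:ℝ)+1) else 0) ≤ 1 := by
    intro W u
    rw [← Finset.sum_filter, Finset.sum_const, nsmul_eq_mul, mul_one_div,
      div_le_one (by positivity : (0:ℝ) < (u:ℝ)+1)]
    have hc : (W.filter (fun v => v ≤ u)).card ≤ u + 1 := by
      have hsub : (W.filter (fun v => v ≤ u)) ⊆ Finset.range (u+1) := by
        intro v hv
        simp only [Finset.mem_filter] at hv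
        simp only [Finset.mem_range]
        omega
      simpa using Finset.card_le_card hsub
    exact_mod_cast hc
  calc ∑ u ∈ U, ∑ v ∈ V, (1:ℝ)/((u:ℝ)+(v:ℝ)+1)
      ≤ ∑ u ∈ U, ∑ v ∈ V, ((if v ≤ u then (1:ℝ)/((u:ℝ)+1) else 0)
          + (if u ≤ v then (1:ℝ)/((v:ℝ)+1) else 0)) := by
        refine Finset.sum_le_sum fun u hu => Finset.sum_le_sum fun v hv => key u hu v hv
    _ = (∑ u ∈ U, ∑ v ∈ V, (if v ≤ u then (1:ℝ)/((u:ℝ)+1) else 0))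
          + ∑ u ∈ U, ∑ v ∈ V, (if u ≤ v then (1:ℝ)/((v:ℝ)+1) else 0) := by
        rw [← Finset.sum_add_distrib]
        exact Finset.sum_congr rfl fun u _ => Finset.sum_add_distrib
    _ ≤ (U.card : ℝ) + V.card := by
        have hA : (∑ u ∈ U, ∑ v ∈ V, (if v ≤ u then (1:ℝ)/((u:ℝ)+1) else 0)) ≤ U.card := by
          calc ∑ u ∈ U, ∑ v ∈ V, (if v ≤ u then (1:ℝ)/((u:ℝ)+1) else 0)
              ≤ ∑ _u ∈ U, (1:ℝ) := Finset.sum_le_sum fun u _ => hbound V u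
            _ = U.card := by simp
        have hB : (∑ u ∈ U, ∑ v ∈ V, (if u ≤ v then (1:ℝ)/((v:ℝ)+1) else 0)) ≤ V.card := by
          rw [Finset.sum_comm]
          calc ∑ v ∈ V, ∑ u ∈ U, (if u ≤ v then (1:ℝ)/((v:ℝ)+1) else 0)
              ≤ ∑ _v ∈ V, (1:ℝ) := Finset.sum_le_sum fun v _ => hbound U v
            _ = V.card := by simp
        linarith


set_option maxHeartbeats 1000000 in
/-- There is a constant `c > 0` such that for every `n ≥ 2`,
every `(τ,1)`-left-sided LSO for the comb metric on `2n` points with parameter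
`M = n` satisfies `τ ≥ c·log₂ n`. -/
theorem left_sided_LSO_lower_bound :
    ∃ c : ℝ, 0 < c ∧
      ∀ n : ℕ, 2 ≤ n →
      ∀ (τ : ℕ) (F : Finset (List (Fin n ⊕ Fin n))),
        IsLeftSidedLSO (combD n) τ 1 F →
        c * Real.logb 2 n ≤ (τ : ℝ) := by
  have hlog2 : (0:ℝ) < Real.log 2 := Real.log_pos (by norm_num)
  refine ⟨Real.log 2 / 48, by positivity, ?_⟩
  intro n hn τ F hF
  obtain ⟨-, hτ, hcov⟩ := hF
  have npos : 0 < n := by omega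
  classical
  haveI instD : ∀ σ : List (Fin n ⊕ Fin n),
      DecidablePred (fun b : Fin n => (Sum.inr b : Fin n ⊕ Fin n) ∈ σ) :=
    fun σ b => Classical.propDecidable _
  haveI instDL : DecidableEq (List (Fin n ⊕ Fin n)) := Classical.decEq _
  -- reduce to `log n ≤ 48 τ`
  suffices hlog : Real.log n ≤ 48 * τ by
    rw [Real.logb]
    have hEq : Real.log 2 / 48 * (Real.log n / Real.log 2) = Real.log n / 48 := by
      field_simp
    rw [hEq]
    linarith
  -- first-leaf function
  have exmin : ∀ σ : List (Fin n ⊕ Fin n), (∃ b : Fin n, (Sum.inr b : Fin n ⊕ Fin n) ∈ σ) →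
      ∃ a : Fin n, (Sum.inr a : Fin n ⊕ Fin n) ∈ σ ∧ ∀ b : Fin n, (Sum.inr b : Fin n ⊕ Fin n) ∈ σ →
        @List.idxOf (Fin n ⊕ Fin n) instBEqOfDecidableEq (Sum.inr a) σ ≤
          @List.idxOf (Fin n ⊕ Fin n) instBEqOfDecidableEq (Sum.inr b) σ := by
    intro σ hσ
    obtain ⟨b, hb⟩ := hσ
    have hne : (Finset.univ.filter (fun b : Fin n => (Sum.inr b : Fin n ⊕ Fin n) ∈ σ)).Nonempty :=
      ⟨b, by simp [hb]⟩
    obtain ⟨a, ha, hmin⟩ := Finset.exists_min_image _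
      (fun b : Fin n => @List.idxOf (Fin n ⊕ Fin n) instBEqOfDecidableEq (Sum.inr b) σ) hne
    refine ⟨a, by simpa using ha, fun b' hb' => hmin b' (by simp [hb'])⟩
  obtain ⟨phi, hphi⟩ : ∃ phi : List (Fin n ⊕ Fin n) → Fin n,
      ∀ σ, ∀ b : Fin n, (Sum.inr b : Fin n ⊕ Fin n) ∈ σ → (Sum.inr (phi σ) : Fin n ⊕ Fin n) ∈ σ ∧
        ∀ b' : Fin n, (Sum.inr b' : Fin n ⊕ Fin n) ∈ σ →
          @List.idxOf (Fin n ⊕ Fin n) instBEqOfDecidableEq (Sum.inr (phi σ)) σ ≤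
            @List.idxOf (Fin n ⊕ Fin n) instBEqOfDecidableEq (Sum.inr b') σ := by
    refine ⟨fun σ => if hσ : ∃ b : Fin n, (Sum.inr b : Fin n ⊕ Fin n) ∈ σ
      then (exmin σ hσ).choose else ⟨0, npos⟩, ?_⟩
    intro σ b hb
    have hσ : ∃ b : Fin n, (Sum.inr b : Fin n ⊕ Fin n) ∈ σ := ⟨b, hb⟩
    simp only [dif_pos hσ]
    exact (exmin σ hσ).choose_spec
  -- step 1 : every leaf pair i < j is served by a list whose first leaf lies in [i,j]
  have step1 : ∀ p : Fin n × Fin n, (p.1 : ℕ) < (p.2 : ℕ) →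
      ∃ σ, σ ∈ F ∧ (Sum.inr p.1 : Fin n ⊕ Fin n) ∈ σ ∧ (Sum.inr p.2 : Fin n ⊕ Fin n) ∈ σ ∧
        (p.1 : ℕ) ≤ (phi σ : ℕ) ∧ (phi σ : ℕ) ≤ (p.2 : ℕ) := by
    rintro ⟨i, j⟩ hij
    obtain ⟨σ, hσF, hiσ, hjσ, hP⟩ := hcov (Sum.inr i) (Sum.inr j)
    obtain ⟨hφσ, hφmin⟩ := hphi σ i hiσ
    have hijne : i ≠ j := fun e => by simp [e] at hij
    have hdij : combD n (Sum.inr i) (Sum.inr j) = 2 * n + |(i.val : ℝ) - (j.val : ℝ)| := by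
      simp [combD, hijne]
    have habsij : |(i.val : ℝ) - (j.val : ℝ)| = (j.val : ℝ) - (i.val : ℝ) := by
      rw [abs_sub_comm, abs_of_nonneg]
      have : (i.val : ℝ) ≤ (j.val : ℝ) := by exact_mod_cast le_of_lt hij
      linarith
    refine ⟨σ, hσF, hiσ, hjσ, ?_, ?_⟩
    · -- i ≤ phi σ, using pair (phi σ, j)
      by_cases hφj : phi σ = j
      · rw [hφj]; exact le_of_lt hij
      · have e2 := hP (Sum.inr (phi σ)) hφσ (Sum.inr j) hjσ (hφmin i hiσ) (le_refl _)
        rw [hdij, habsij] at e2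
        have hd : combD n (Sum.inr (phi σ)) (Sum.inr j)
            = 2 * n + |((phi σ).val : ℝ) - (j.val : ℝ)| := by
          simp [combD, hφj]
        rw [hd] at e2
        have habs : |((phi σ).val : ℝ) - (j.val : ℝ)| ≤ (j.val : ℝ) - (i.val : ℝ) := by
          linarith
        have h2 := (abs_le.mp habs).1
        have : (i.val : ℝ) ≤ ((phi σ).val : ℝ) := by linarith
        exact_mod_cast this
    · -- phi σ ≤ j, using pair (i, phi σ)
      by_cases hiφ : i = phi σ
      · rw [← hiφ]; exact le_of_lt hij
      · have e1 := hP (Sum.inr i) hiσ (Sum.inr (phi σ)) hφσ (le_refl _) (hφmin j hjσ)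
        rw [hdij, habsij] at e1
        have hd : combD n (Sum.inr i) (Sum.inr (phi σ))
            = 2 * n + |(i.val : ℝ) - ((phi σ).val : ℝ)| := by
          simp [combD, hiφ]
        rw [hd] at e1
        have habs : |(i.val : ℝ) - ((phi σ).val : ℝ)| ≤ (j.val : ℝ) - (i.val : ℝ) := by
          linarith
        have h2 := (abs_le.mp habs).1
        have : ((phi σ).val : ℝ) ≤ (j.val : ℝ) := by linarith
        exact_mod_cast this
  choose! serve hserve using step1
  set P : Finset (Fin n × Fin n) :=
    Finset.univ.filter (fun p : Fin n × Fin n => (p.1 : ℕ) < (p.2 : ℕ)) with hP_def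
  set w : Fin n × Fin n → ℝ := fun p => 1 / ((p.2.val : ℝ) - (p.1.val : ℝ)) with hw_def
  set L : List (Fin n ⊕ Fin n) → ℕ :=
    fun σ => (Finset.univ.filter (fun b : Fin n => (Sum.inr b : Fin n ⊕ Fin n) ∈ σ)).card
    with hL_def
  set h : ℕ := n / 2 with hh_def
  -- lower bound on total weight
  have hlow : (h : ℝ) * Real.log ((h:ℝ)+1) ≤ ∑ p ∈ P, w p := by
    set T : Finset (ℕ × ℕ) := (Finset.range h) ×ˢ (Finset.range h) with hT
    set e2 : ℕ × ℕ → Fin n × Fin n :=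
      fun q => (⟨q.1 % n, Nat.mod_lt _ npos⟩, ⟨(q.1 + q.2 + 1) % n, Nat.mod_lt _ npos⟩) with he2
    have hq12 : ∀ q ∈ T, q.1 < h ∧ q.2 < h := by
      intro q hq
      rw [hT, Finset.mem_product, Finset.mem_range, Finset.mem_range] at hq
      exact hq
    have hmod : ∀ q ∈ T, q.1 % n = q.1 ∧ (q.1 + q.2 + 1) % n = q.1 + q.2 + 1 := by
      intro q hq
      obtain ⟨h1, h2⟩ := hq12 q hq
      constructor <;> apply Nat.mod_eq_of_lt <;> omega
    have hinj2 : ∀ q ∈ T, ∀ q' ∈ T, e2 q = e2 q' → q = q' := by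
      intro q hq q' hq' he
      obtain ⟨hm1, hm2⟩ := hmod q hq
      obtain ⟨hm1', hm2'⟩ := hmod q' hq'
      have e1 : q.1 % n = q'.1 % n := congrArg (fun z : Fin n × Fin n => (z.1 : ℕ)) he
      have e2' : (q.1+q.2+1) % n = (q'.1+q'.2+1) % n :=
        congrArg (fun z : Fin n × Fin n => (z.2 : ℕ)) he
      rw [hm1, hm1'] at e1
      rw [hm2, hm2'] at e2'
      have hq2 : q.2 = q'.2 := by omega
      exact Prod.ext e1 hq2
    have hsub2 : T.image e2 ⊆ P := by
      intro p hp
      rw [Finset.mem_image] at hp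
      obtain ⟨q, hq, rfl⟩ := hp
      rw [hP_def, Finset.mem_filter]
      refine ⟨Finset.mem_univ _, ?_⟩
      obtain ⟨hm1, hm2⟩ := hmod q hq
      show ((⟨q.1 % n, Nat.mod_lt _ npos⟩ : Fin n) : ℕ) < ((⟨(q.1+q.2+1) % n, Nat.mod_lt _ npos⟩ : Fin n) : ℕ)
      simp only []
      omega
    have hvals : ∀ q ∈ T, w (e2 q) = 1 / ((q.2:ℝ) + 1) := by
      intro q hq
      obtain ⟨hm1, hm2⟩ := hmod q hq
      show (1:ℝ) / ((((q.1+q.2+1) % n : ℕ) : ℝ) - ((q.1 % n : ℕ) : ℝ)) = 1 / ((q.2:ℝ) + 1)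
      rw [hm1, hm2]
      have : ((q.1+q.2+1 : ℕ) : ℝ) - ((q.1 : ℕ) : ℝ) = (q.2:ℝ) + 1 := by push_cast; ring
      rw [this]
    calc (h:ℝ) * Real.log ((h:ℝ)+1)
        ≤ (h:ℝ) * ∑ k ∈ Finset.range h, (1:ℝ)/((k:ℝ)+1) :=
          mul_le_mul_of_nonneg_left (harmonic_lower' h) (by positivity)
      _ = ∑ q ∈ T, (1:ℝ)/((q.2:ℝ)+1) := by
          rw [hT, Finset.sum_product]
          simp [Finset.sum_const, Finset.card_range, nsmul_eq_mul]
      _ = ∑ q ∈ T, w (e2 q) := Finset.sum_congr rfl (fun q hq => (hvals q hq).symm)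
      _ = ∑ p ∈ T.image e2, w p := by
          rw [Finset.sum_image hinj2]
      _ ≤ ∑ p ∈ P, w p := by
          apply Finset.sum_le_sum_of_subset_of_nonneg hsub2
          intro p hp _
          rw [hP_def, Finset.mem_filter] at hp
          have hlt : (p.1.val:ℝ) < (p.2.val:ℝ) := by exact_mod_cast hp.2
          simp only [hw_def]
          apply le_of_lt
          apply div_pos one_pos
          linarith
  -- upper bound on total weight
  have hfib : ∑ σ ∈ F, ∑ p ∈ P.filter (fun p => serve p = σ), w p = ∑ p ∈ P, w p := by
    apply Finset.sum_fiberwise_of_maps_to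
    intro p hp
    rw [hP_def, Finset.mem_filter] at hp
    exact (hserve p hp.2).1
  have hlist : ∀ σ ∈ F, ∑ p ∈ P.filter (fun p => serve p = σ), w p ≤ 4 * (L σ : ℝ) := by
    intro σ hσF
    set φn : ℕ := (phi σ : ℕ) with hφn
    set Q := P.filter (fun p => serve p = σ) with hQ
    have hQfacts : ∀ p ∈ Q, (p.1:ℕ) < (p.2:ℕ) ∧ (Sum.inr p.1 : Fin n ⊕ Fin n) ∈ σ ∧
        (Sum.inr p.2 : Fin n ⊕ Fin n) ∈ σ ∧ (p.1:ℕ) ≤ φn ∧ φn ≤ (p.2:ℕ) := by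
      intro p hp
      rw [hQ, Finset.mem_filter] at hp
      obtain ⟨hpP, hps⟩ := hp
      rw [hP_def, Finset.mem_filter] at hpP
      have hlt := hpP.2
      obtain ⟨-, h2, h3, h4, h5⟩ := hserve p hlt
      rw [hps] at h2 h3 h4 h5
      exact ⟨hlt, h2, h3, h4, h5⟩
    set U : Finset ℕ :=
      ((Finset.univ : Finset (Fin n)).filter
        (fun a : Fin n => (Sum.inr a : Fin n ⊕ Fin n) ∈ σ ∧ (a:ℕ) ≤ φn)).image
        (fun a : Fin n => φn - (a:ℕ)) with hU
    set V : Finset ℕ :=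
      ((Finset.univ : Finset (Fin n)).filter
        (fun b : Fin n => (Sum.inr b : Fin n ⊕ Fin n) ∈ σ ∧ φn ≤ (b:ℕ))).image
        (fun b : Fin n => (b:ℕ) - φn) with hV
    set em : Fin n × Fin n → ℕ × ℕ := fun p => (φn - (p.1:ℕ), (p.2:ℕ) - φn) with hem
    have hinj : ∀ p ∈ Q, ∀ p' ∈ Q, em p = em p' → p = p' := by
      intro p hp p' hp' he
      obtain ⟨hlt, -, -, h4, h5⟩ := hQfacts p hp
      obtain ⟨hlt', -, -, h4', h5'⟩ := hQfacts p' hp'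
      have he1 : φn - (p.1:ℕ) = φn - (p'.1:ℕ) := congrArg Prod.fst he
      have he2 : (p.2:ℕ) - φn = (p'.2:ℕ) - φn := congrArg Prod.snd he
      have hv1 : (p.1:ℕ) = (p'.1:ℕ) := by omega
      have hv2 : (p.2:ℕ) = (p'.2:ℕ) := by omega
      exact Prod.ext (Fin.ext hv1) (Fin.ext hv2)
    have hsub : Q.image em ⊆ U ×ˢ V := by
      intro q hq
      rw [Finset.mem_image] at hq
      obtain ⟨p, hp, rfl⟩ := hq
      obtain ⟨hlt, h2, h3, h4, h5⟩ := hQfacts p hp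
      rw [Finset.mem_product]
      constructor
      · rw [hU]
        exact Finset.mem_image_of_mem _ (by
          rw [Finset.mem_filter]
          exact ⟨Finset.mem_univ _, h2, h4⟩)
      · rw [hV]
        exact Finset.mem_image_of_mem _ (by
          rw [Finset.mem_filter]
          exact ⟨Finset.mem_univ _, h3, h5⟩)
    have hcardU : (U.card : ℝ) ≤ (L σ : ℝ) := by
      have h1 : U.card ≤ L σ := by
        refine le_trans Finset.card_image_le (Finset.card_le_card ?_)
        intro a ha
        rw [Finset.mem_filter] at ha ⊢
        exact ⟨ha.1, ha.2.1⟩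
      exact_mod_cast h1
    have hcardV : (V.card : ℝ) ≤ (L σ : ℝ) := by
      have h1 : V.card ≤ L σ := by
        refine le_trans Finset.card_image_le (Finset.card_le_card ?_)
        intro a ha
        rw [Finset.mem_filter] at ha ⊢
        exact ⟨ha.1, ha.2.1⟩
      exact_mod_cast h1
    calc ∑ p ∈ Q, w p
        ≤ ∑ p ∈ Q, 2 * (1 / (((em p).1 : ℝ) + ((em p).2 : ℝ) + 1)) := by
          apply Finset.sum_le_sum
          intro p hp
          obtain ⟨hlt, -, -, h4, h5⟩ := hQfacts p hp
          have hc1 : (((em p).1 : ℕ) : ℝ) = (φn : ℝ) - (p.1.val : ℝ) := by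
            show ((φn - (p.1:ℕ) : ℕ) : ℝ) = _
            rw [Nat.cast_sub h4]
          have hc2 : (((em p).2 : ℕ) : ℝ) = (p.2.val : ℝ) - (φn : ℝ) := by
            show (((p.2:ℕ) - φn : ℕ) : ℝ) = _
            rw [Nat.cast_sub h5]
          simp only [hw_def]
          rw [hc1, hc2]
          have hx1 : (1:ℝ) ≤ (p.2.val : ℝ) - (p.1.val : ℝ) := by
            have : p.1.val + 1 ≤ p.2.val := hlt
            have := (Nat.cast_le (α := ℝ)).mpr this
            push_cast at this
            linarith
          rw [mul_one_div, div_le_div_iff₀ (by linarith) (by linarith)]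
          linarith
      _ = ∑ q ∈ Q.image em, 2 * (1 / ((q.1 : ℝ) + (q.2 : ℝ) + 1)) := by
          rw [Finset.sum_image hinj]
      _ ≤ ∑ q ∈ U ×ˢ V, 2 * (1 / ((q.1 : ℝ) + (q.2 : ℝ) + 1)) := by
          apply Finset.sum_le_sum_of_subset_of_nonneg hsub
          intro q _ _
          positivity
      _ = 2 * ∑ q ∈ U ×ˢ V, 1 / ((q.1 : ℝ) + (q.2 : ℝ) + 1) := by
          rw [Finset.mul_sum]
      _ ≤ 2 * ((U.card : ℝ) + V.card) := by
          have := prod_sum_le' U V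
          linarith
      _ ≤ 4 * (L σ : ℝ) := by linarith
  have hLsum : ∑ σ ∈ F, (L σ : ℝ) ≤ (n : ℝ) * τ := by
    have h0 : ∀ σ : List (Fin n ⊕ Fin n),
        (L σ : ℝ) = ∑ b : Fin n, (if (Sum.inr b : Fin n ⊕ Fin n) ∈ σ then (1:ℝ) else 0) := by
      intro σ
      rw [hL_def]
      simp only []
      rw [Finset.card_filter]
      push_cast
      exact Finset.sum_congr rfl fun b _ => by
        by_cases hbb : (Sum.inr b : Fin n ⊕ Fin n) ∈ σ <;> simp [hbb]
    calc ∑ σ ∈ F, (L σ : ℝ)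
        = ∑ σ ∈ F, ∑ b : Fin n, (if (Sum.inr b : Fin n ⊕ Fin n) ∈ σ then (1:ℝ) else 0) :=
          Finset.sum_congr rfl fun σ _ => h0 σ
      _ = ∑ b : Fin n, ∑ σ ∈ F, (if (Sum.inr b : Fin n ⊕ Fin n) ∈ σ then (1:ℝ) else 0) :=
          Finset.sum_comm
      _ ≤ ∑ _b : Fin n, (τ:ℝ) := by
          refine Finset.sum_le_sum fun b _ => ?_
          have h1 := hτ (Sum.inr b)
          rw [Finset.card_filter] at h1
          have h3 : (∑ σ ∈ F, if (Sum.inr b : Fin n ⊕ Fin n) ∈ σ then (1:ℕ) else 0) ≤ τ := by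
            convert h1 using 2 with σ hσ
            by_cases hbb : (Sum.inr b : Fin n ⊕ Fin n) ∈ σ <;> simp [hbb]
          calc ∑ σ ∈ F, (if (Sum.inr b : Fin n ⊕ Fin n) ∈ σ then (1:ℝ) else 0)
              = ((∑ σ ∈ F, if (Sum.inr b : Fin n ⊕ Fin n) ∈ σ then (1:ℕ) else 0 : ℕ) : ℝ) := by
                push_cast
                exact Finset.sum_congr rfl fun σ _ => by
                  by_cases hbb : (Sum.inr b : Fin n ⊕ Fin n) ∈ σ <;> simp [hbb]
            _ ≤ (τ:ℝ) := by exact_mod_cast h3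
      _ = (n:ℝ) * τ := by
          rw [Finset.sum_const, Finset.card_univ, Fintype.card_fin, nsmul_eq_mul]
  have hup : ∑ p ∈ P, w p ≤ 4 * ((n:ℝ) * τ) := by
    rw [← hfib]
    calc ∑ σ ∈ F, ∑ p ∈ P.filter (fun p => serve p = σ), w p
        ≤ ∑ σ ∈ F, 4 * (L σ : ℝ) := Finset.sum_le_sum hlist
      _ = 4 * ∑ σ ∈ F, (L σ : ℝ) := by rw [Finset.mul_sum]
      _ ≤ 4 * ((n:ℝ) * τ) := by linarith
  -- final arithmetic
  have hh4 : (n:ℝ) ≤ 4 * (h:ℝ) := by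
    have : n ≤ 4 * (n/2) := by omega
    calc (n:ℝ) ≤ ((4 * (n/2) : ℕ) : ℝ) := by exact_mod_cast this
      _ = 4 * (h:ℝ) := by rw [hh_def]; push_cast; ring
  have hcube : (n:ℝ) ≤ ((h:ℝ)+1)^3 := by
    have h1 : (n:ℝ) + 1 ≤ 2*((h:ℝ)+1) := by
      have h1n : n + 1 ≤ 2 * (n/2) + 2 := by omega
      calc (n:ℝ) + 1 = ((n + 1 : ℕ) : ℝ) := by push_cast; ring
        _ ≤ ((2 * (n/2) + 2 : ℕ) : ℝ) := by exact_mod_cast h1n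
        _ = 2*((h:ℝ)+1) := by rw [hh_def]; push_cast; ring
    have hn2 : (2:ℝ) ≤ n := by exact_mod_cast hn
    have e1 : ((n:ℝ)+1)^3 ≤ (2*((h:ℝ)+1))^3 := by
      apply pow_le_pow_left₀ (by positivity) h1
    have e2 : 8*(n:ℝ) ≤ ((n:ℝ)+1)^3 := by nlinarith [sq_nonneg ((n:ℝ)-1)]
    have e3 : (2*((h:ℝ)+1))^3 = 8*((h:ℝ)+1)^3 := by ring
    nlinarith
  have hlog3 : Real.log n ≤ 3 * Real.log ((h:ℝ)+1) := by
    calc Real.log n ≤ Real.log (((h:ℝ)+1)^3) := by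
          apply Real.log_le_log (by positivity) hcube
      _ = 3 * Real.log ((h:ℝ)+1) := by rw [Real.log_pow]; push_cast; ring
  have hlognn : (0:ℝ) ≤ Real.log ((h:ℝ)+1) := Real.log_nonneg (by
    have : (0:ℝ) ≤ (h:ℝ) := by positivity
    linarith)
  have hnposR : (0:ℝ) < n := by exact_mod_cast npos
  have hchain : (n:ℝ) * Real.log n ≤ 48 * ((n:ℝ) * τ) := by
    have c1 : (n:ℝ) * Real.log n ≤ (n:ℝ) * (3 * Real.log ((h:ℝ)+1)) :=
      mul_le_mul_of_nonneg_left hlog3 (le_of_lt hnposR)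
    have c2 : (n:ℝ) * (3 * Real.log ((h:ℝ)+1)) ≤ (4*(h:ℝ)) * (3 * Real.log ((h:ℝ)+1)) := by
      apply mul_le_mul_of_nonneg_right hh4 (by linarith)
    have c3 : (4*(h:ℝ)) * (3 * Real.log ((h:ℝ)+1)) = 12 * ((h:ℝ) * Real.log ((h:ℝ)+1)) := by ring
    have c4 : (h:ℝ) * Real.log ((h:ℝ)+1) ≤ 4 * ((n:ℝ) * τ) := le_trans hlow hup
    nlinarith
  have hfinal : Real.log n ≤ 48 * τ := by
    have := (mul_le_mul_iff_right₀ hnposR).mp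
      (by linarith [hchain] : (n:ℝ) * Real.log n ≤ (n:ℝ) * (48 * τ))
    linarith
  exact hfinal
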